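/- Let ζ > 0 with ζ < 1/4. There exists a constant C > 0 depending only on ζ such that for every integer N ≥ 1 and all real coefficients a₁, …, a_N, if f(x) = ∑_{k=1}^{N} aₖ sin(kπx) and g(x) = ∑_{k=1}^{N} aₖ (kπ)^{−1/2−2ζ} ( cos(kπx) + (1 − (−1)^k) x − 1 ), then (∫₀¹ |g(x)|² dx)^{1/2} ≤ C (∫₀¹ |f(x)|² dx)^{1/2}. -/
import Mathlib


open Real Finset intervalIntegral

private lemma intcos (c : ℝ) (hc : c ≠ 0) :
    ∫ x in (0:ℝ)..1, Real.cos (c * x) = Real.sin c / c := by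
  rw [intervalIntegral.integral_comp_mul_left Real.cos hc]
  simp [integral_cos, div_eq_inv_mul]

private lemma orth (j k : ℕ) (hj : 1 ≤ j) (hk : 1 ≤ k) :
    ∫ x in (0:ℝ)..1, Real.sin ((j:ℝ)*π*x) * Real.sin ((k:ℝ)*π*x)
      = if j = k then 1/2 else 0 := by
  have hprod : ∀ x : ℝ, Real.sin ((j:ℝ)*π*x) * Real.sin ((k:ℝ)*π*x)
      = (Real.cos (((j:ℝ)-k)*π*x) - Real.cos (((j:ℝ)+k)*π*x))/2 := by
    intro x
    have h1 : ((j:ℝ)-k)*π*x = (j:ℝ)*π*x - (k:ℝ)*π*x := by ring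
    have h2 : ((j:ℝ)+k)*π*x = (j:ℝ)*π*x + (k:ℝ)*π*x := by ring
    rw [h1, h2, Real.cos_sub, Real.cos_add]; ring
  simp only [hprod]
  have hi1 : IntervalIntegrable (fun x => Real.cos (((j:ℝ)-k)*π*x)) MeasureTheory.volume 0 1 :=
    (Continuous.intervalIntegrable (by continuity) 0 1)
  have hi2 : IntervalIntegrable (fun x => Real.cos (((j:ℝ)+k)*π*x)) MeasureTheory.volume 0 1 :=
    (Continuous.intervalIntegrable (by continuity) 0 1)
  rw [intervalIntegral.integral_div, intervalIntegral.integral_sub hi1 hi2]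
  have hsum : ((j:ℝ)+k)*π ≠ 0 := by
    have : (0:ℝ) < (j:ℝ)+k := by positivity
    positivity
  have hI2 : (∫ x in (0:ℝ)..1, Real.cos (((j:ℝ)+k)*π*x)) = 0 := by
    have := intcos (((j:ℝ)+k)*π) hsum
    simp only [mul_assoc] at this ⊢
    rw [this]
    have : ((j:ℝ)+k) = ((j+k : ℕ) : ℝ) := by push_cast; ring
    rw [this, Real.sin_nat_mul_pi, zero_div]
  by_cases h : j = k
  · subst h
    simp only [sub_self, zero_mul, Real.cos_zero, hI2]
    simp
  · have hdiff : ((j:ℝ)-k)*π ≠ 0 := by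
      have : ((j:ℝ)-k) ≠ 0 := sub_ne_zero.mpr (by exact_mod_cast h)
      exact mul_ne_zero this pi_ne_zero
    have hI1 : (∫ x in (0:ℝ)..1, Real.cos (((j:ℝ)-k)*π*x)) = 0 := by
      have := intcos (((j:ℝ)-k)*π) hdiff
      simp only [mul_assoc] at this ⊢
      rw [this]
      have : ((j:ℝ)-k) = (((j:ℤ)-k : ℤ) : ℝ) := by push_cast; ring
      rw [this, Real.sin_int_mul_pi, zero_div]
    simp [hI1, hI2, h]

private lemma fnorm (N : ℕ) (a : ℕ → ℝ) :
    (∫ x in (0:ℝ)..1, (∑ k ∈ Finset.Icc 1 N, a k * Real.sin ((k:ℝ)*π*x))^2)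
      = (1/2) * ∑ k ∈ Finset.Icc 1 N, (a k)^2 := by
  have hexp : ∀ x : ℝ, (∑ k ∈ Finset.Icc 1 N, a k * Real.sin ((k:ℝ)*π*x))^2
      = ∑ j ∈ Finset.Icc 1 N, ∑ k ∈ Finset.Icc 1 N,
          (a j * a k) * (Real.sin ((j:ℝ)*π*x) * Real.sin ((k:ℝ)*π*x)) := by
    intro x
    rw [sq, Finset.sum_mul_sum]
    exact Finset.sum_congr rfl fun j _ => Finset.sum_congr rfl fun k _ => by ring
  simp only [hexp]
  rw [intervalIntegral.integral_finset_sum]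
  · have hrow : ∀ j ∈ Finset.Icc 1 N,
        (∫ x in (0:ℝ)..1, ∑ k ∈ Finset.Icc 1 N,
          (a j * a k) * (Real.sin ((j:ℝ)*π*x) * Real.sin ((k:ℝ)*π*x)))
        = (a j)^2 * (1/2) := by
      intro j hj
      rw [intervalIntegral.integral_finset_sum
        (fun k _ => Continuous.intervalIntegrable (by continuity) 0 1)]
      have : ∀ k ∈ Finset.Icc 1 N,
          (∫ x in (0:ℝ)..1, (a j * a k) * (Real.sin ((j:ℝ)*π*x) * Real.sin ((k:ℝ)*π*x)))
          = (a j * a k) * (if j = k then 1/2 else 0) := by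
        intro k hk
        rw [intervalIntegral.integral_const_mul,
          orth j k (Finset.mem_Icc.mp hj).1 (Finset.mem_Icc.mp hk).1]
      rw [Finset.sum_congr rfl this]
      simp only [mul_ite, mul_zero]
      rw [Finset.sum_ite_eq (Finset.Icc 1 N) j (fun k => a j * a k * (1/2))]
      simp [hj, sq]
    rw [Finset.sum_congr rfl hrow, ← Finset.sum_mul, mul_comm]
  · intro j _
    exact Continuous.intervalIntegrable (continuous_finset_sum _ fun k _ => by fun_prop) 0 1

/-- `L²(0,1)`-boundedness, uniformly in `N`, of the operator `A⁻¹ B A^{1/4−ζ}` (for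
`0 < ζ < 1/4`) acting on finite sine polynomials `f(x) = ∑_{k=1}^N aₖ sin(kπx)`, where
`A = −d²/dx²` with homogeneous Dirichlet boundary conditions on `[0,1]` and `B = d/dx`;
on the mode `sin(kπx)` the operator acts as multiplication by `(kπ)^{−1/2−2ζ}` followed by
replacing `sin(kπx)` with `cos(kπx) + (1−(−1)^k)x − 1`. -/
theorem L2_bound_inverse_deriv_power (ζ : ℝ) (hζ : 0 < ζ) (hζ' : ζ < 1 / 4) :
    ∃ C > (0 : ℝ), ∀ N : ℕ, 1 ≤ N → ∀ a : ℕ → ℝ,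
      Real.sqrt (∫ x in (0 : ℝ)..1,
        |∑ k ∈ Finset.Icc 1 N, a k * ((k : ℝ) * π) ^ (-(1 / 2) - 2 * ζ) *
          (Real.cos ((k : ℝ) * π * x) + (1 - (-1 : ℝ) ^ k) * x - 1)| ^ 2) ≤
      C * Real.sqrt (∫ x in (0 : ℝ)..1,
        |∑ k ∈ Finset.Icc 1 N, a k * Real.sin ((k : ℝ) * π * x)| ^ 2) := by
  set q : ℝ := -(1/2) - 2*ζ with hq
  have hq0 : q ≤ 0 := by rw [hq]; linarith
  have hS : Summable (fun k : ℕ => (k:ℝ) ^ (2*q)) :=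
    Real.summable_nat_rpow.mpr (by rw [hq]; linarith)
  set S : ℝ := ∑' k : ℕ, (k:ℝ) ^ (2*q) with hSdef
  have hS0 : 0 ≤ S := tsum_nonneg fun k => Real.rpow_nonneg (Nat.cast_nonneg k) _
  refine ⟨4 * Real.sqrt 2 * Real.sqrt S + 1, by positivity, ?_⟩
  intro N hN a
  set c : ℕ → ℝ := fun k => ((k:ℝ) * π) ^ q with hc
  have hc0 : ∀ k, 0 ≤ c k := fun k => Real.rpow_nonneg (by positivity) _
  set M : ℝ := ∑ k ∈ Finset.Icc 1 N, |a k| * c k * 4 with hMdef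
  have hM0 : 0 ≤ M := Finset.sum_nonneg fun k _ => by
    have := hc0 k; have := abs_nonneg (a k); positivity
  -- RHS integral value
  have hF : (∫ x in (0:ℝ)..1, |∑ k ∈ Finset.Icc 1 N, a k * Real.sin ((k:ℝ)*π*x)| ^ 2)
      = (1/2) * ∑ k ∈ Finset.Icc 1 N, (a k)^2 := by
    simp only [sq_abs]; exact fnorm N a
  set A2 : ℝ := ∑ k ∈ Finset.Icc 1 N, (a k)^2 with hA2
  have hA20 : 0 ≤ A2 := Finset.sum_nonneg fun k _ => sq_nonneg _
  -- pointwise bound on g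
  have hptw : ∀ x ∈ Set.Icc (0:ℝ) 1,
      |∑ k ∈ Finset.Icc 1 N, a k * c k *
        (Real.cos ((k:ℝ)*π*x) + (1 - (-1:ℝ)^k) * x - 1)| ≤ M := by
    intro x hx
    refine (Finset.abs_sum_le_sum_abs _ _).trans (Finset.sum_le_sum fun k _ => ?_)
    have hw : |Real.cos ((k:ℝ)*π*x) + (1 - (-1:ℝ)^k) * x - 1| ≤ 4 := by
      have h1 : |Real.cos ((k:ℝ)*π*x)| ≤ 1 := Real.abs_cos_le_one _
      have h2 : |1 - (-1:ℝ)^k| ≤ 2 := by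
        rcases Nat.even_or_odd k with h | h
        · rw [h.neg_one_pow]; norm_num
        · rw [h.neg_one_pow]; norm_num
      have hx1 : |x| ≤ 1 := abs_le.mpr ⟨by linarith [hx.1], hx.2⟩
      have h3 : |(1 - (-1:ℝ)^k) * x| ≤ 2 := by
        rw [abs_mul]
        calc |1 - (-1:ℝ)^k| * |x| ≤ 2 * 1 :=
              mul_le_mul h2 hx1 (abs_nonneg x) (by norm_num)
          _ = 2 := by norm_num
      calc |Real.cos ((k:ℝ)*π*x) + (1 - (-1:ℝ)^k) * x - 1|
          ≤ |Real.cos ((k:ℝ)*π*x) + (1 - (-1:ℝ)^k) * x| + |(1:ℝ)| := abs_sub _ _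
        _ ≤ (|Real.cos ((k:ℝ)*π*x)| + |(1 - (-1:ℝ)^k) * x|) + |(1:ℝ)| := by
            gcongr; exact abs_add_le _ _
        _ ≤ 4 := by rw [abs_one]; linarith
    rw [abs_mul, abs_mul, abs_of_nonneg (hc0 k)]
    have h4 : 0 ≤ |a k| * c k := mul_nonneg (abs_nonneg _) (hc0 k)
    exact mul_le_mul_of_nonneg_left hw h4
  -- LHS integral ≤ M^2
  have hint : (∫ x in (0:ℝ)..1,
      |∑ k ∈ Finset.Icc 1 N, a k * c k *
        (Real.cos ((k:ℝ)*π*x) + (1 - (-1:ℝ)^k) * x - 1)| ^ 2) ≤ M ^ 2 := by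
    have hle : ∀ x ∈ Set.Icc (0:ℝ) 1,
        |∑ k ∈ Finset.Icc 1 N, a k * c k *
          (Real.cos ((k:ℝ)*π*x) + (1 - (-1:ℝ)^k) * x - 1)| ^ 2 ≤ M ^ 2 := by
      intro x hx
      exact pow_le_pow_left₀ (abs_nonneg _) (hptw x hx) 2
    calc (∫ x in (0:ℝ)..1, |∑ k ∈ Finset.Icc 1 N, a k * c k *
          (Real.cos ((k:ℝ)*π*x) + (1 - (-1:ℝ)^k) * x - 1)| ^ 2)
        ≤ ∫ _x in (0:ℝ)..1, M ^ 2 := by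
          apply intervalIntegral.integral_mono_on (by norm_num)
          · exact Continuous.intervalIntegrable
              ((continuous_finset_sum _ fun k _ => by fun_prop).abs.pow 2) 0 1
          · exact intervalIntegrable_const
          · exact hle
      _ = M ^ 2 := by simp
  -- Cauchy-Schwarz
  set P : ℝ := ∑ k ∈ Finset.Icc 1 N, |a k| * c k with hP
  have hP0 : 0 ≤ P := Finset.sum_nonneg fun k _ => mul_nonneg (abs_nonneg _) (hc0 k)
  set CS : ℝ := ∑ k ∈ Finset.Icc 1 N, (c k)^2 with hCS
  have hCS0 : 0 ≤ CS := Finset.sum_nonneg fun k _ => sq_nonneg _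
  have hPCS : P ^ 2 ≤ A2 * CS := by
    have := Finset.sum_mul_sq_le_sq_mul_sq (Finset.Icc 1 N) (fun k => |a k|) c
    simpa [sq_abs, hP, hA2, hCS] using this
  have hPle : P ≤ Real.sqrt A2 * Real.sqrt CS := by
    have h1 : P = Real.sqrt (P^2) := (Real.sqrt_sq hP0).symm
    rw [h1, ← Real.sqrt_mul hA20]
    exact Real.sqrt_le_sqrt hPCS
  -- CS ≤ S
  have hCSle : CS ≤ S := by
    have hterm : ∀ k ∈ Finset.Icc 1 N, (c k)^2 ≤ (k:ℝ) ^ (2*q) := by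
      intro k hk
      have hk1 : 1 ≤ k := (Finset.mem_Icc.mp hk).1
      have hkpos : (0:ℝ) < k := by exact_mod_cast hk1
      have hbase : (0:ℝ) < (k:ℝ) * π := by positivity
      have hsq : (c k)^2 = ((k:ℝ)*π) ^ (2*q) := by
        rw [hc, sq, ← Real.rpow_add hbase]; ring_nf
      rw [hsq, Real.mul_rpow (le_of_lt hkpos) Real.pi_pos.le]
      have hπ : π ^ (2*q) ≤ 1 :=
        Real.rpow_le_one_of_one_le_of_nonpos (by linarith [Real.pi_gt_three]) (by linarith)
      exact mul_le_of_le_one_right (Real.rpow_nonneg hkpos.le _) hπ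
    calc CS ≤ ∑ k ∈ Finset.Icc 1 N, (k:ℝ) ^ (2*q) := Finset.sum_le_sum hterm
      _ ≤ S := Summable.sum_le_tsum _ (fun k _ => Real.rpow_nonneg (Nat.cast_nonneg k) _) hS
  -- put everything together
  have hMle : M ≤ 4 * (Real.sqrt A2 * Real.sqrt S) := by
    have hM4 : M = P * 4 := by rw [hMdef, hP, ← Finset.sum_mul]
    rw [hM4]
    have h2 : Real.sqrt CS ≤ Real.sqrt S := Real.sqrt_le_sqrt hCSle
    nlinarith [Real.sqrt_nonneg A2, Real.sqrt_nonneg S, Real.sqrt_nonneg CS, hPle]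
  have hsqrtg : Real.sqrt (∫ x in (0:ℝ)..1,
      |∑ k ∈ Finset.Icc 1 N, a k * c k *
        (Real.cos ((k:ℝ)*π*x) + (1 - (-1:ℝ)^k) * x - 1)| ^ 2) ≤ M := by
    calc Real.sqrt _ ≤ Real.sqrt (M^2) := Real.sqrt_le_sqrt hint
      _ = M := Real.sqrt_sq hM0
  have hsqA2 : Real.sqrt A2 = Real.sqrt 2 * Real.sqrt (∫ x in (0:ℝ)..1,
      |∑ k ∈ Finset.Icc 1 N, a k * Real.sin ((k:ℝ)*π*x)| ^ 2) := by
    rw [hF, ← Real.sqrt_mul (by norm_num : (0:ℝ) ≤ 2)]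
    norm_num
  refine le_trans (hsqrtg.trans hMle) ?_
  rw [hsqA2]
  have hs : 0 ≤ Real.sqrt (∫ x in (0:ℝ)..1,
      |∑ k ∈ Finset.Icc 1 N, a k * Real.sin ((k:ℝ)*π*x)| ^ 2) := Real.sqrt_nonneg _
  nlinarith [Real.sqrt_nonneg S, Real.sqrt_nonneg 2, hs]
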